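/- Let f : X → X be a permutation and W ⊆ X finite. Then the permutation g = (f|_W)^{-1} ∘ f fixes every element of W; hence every permutation f factors as f = f|_W ∘ g with f|_W a finite permutation and g a permutation fixing W pointwise. -/

import Mathlib

/-!
The restriction of `f⁻¹` to `f[W]` inverts `f|_W`: a point `v ∉ W` is sent by `f|_W` to
`z = f⁻ⁿ v`, the first point of its backward orbit outside `f[W]`, and the forward orbit of `z`
stays in `W` for exactly `n` steps, so `(f⁻¹)|_{f[W]}` sends `z` back to `fⁿ z = v`. The minimal `n`
exists because an injective orbit cannot stay inside a finite set without returning to its start.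
Hence `f|_W` is a bijection, and `g = (f⁻¹)|_{f[W]} ∘ f` is the required factor.
-/

noncomputable def restrictPerm {X : Type*} [DecidableEq X] (f : Equiv.Perm X) (W : Finset X) :
    X → X :=
  fun v => if v ∈ W then f v
    else f.symm^[sInf {n : ℕ | f.symm^[n] v ∉ ⇑f '' (W : Set X)}] v

open Function Equiv

theorem Nat.sInf_setOf_eq {p : ℕ → Prop} {n : ℕ} (hn : p n) (hlt : ∀ k < n, ¬p k) :
    sInf {k | p k} = n :=
  le_antisymm (Nat.sInf_le hn) (le_csInf ⟨n, hn⟩ fun _ hk => not_lt.1 fun h => hlt _ h hk)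

theorem Function.Injective.exists_iterate_succ_notMem {α : Type*} {f : α → α}
    (hf : Injective f) {S : Set α} (hS : S.Finite) {v : α} (hv : v ∉ S) :
    ∃ m, f^[m + 1] v ∉ S := by
  by_contra! h
  have : Finite S := hS
  obtain ⟨a, b, hab, heq⟩ :=
    Finite.exists_ne_map_eq_of_infinite fun m : ℕ => (⟨f^[m + 1] v, h m⟩ : S)
  wlog hlt : a < b generalizing a b
  · exact this b a hab.symm heq.symm (by omega)
  have hsplit : f^[b + 1] v = f^[a + 1] (f^[b - a] v) := by
    rw [← iterate_add_apply]; congr 1; omega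
  have hper : f^[b - a] v = v :=
    (hf.iterate (a + 1) (hsplit.symm.trans (congrArg Subtype.val heq).symm))
  obtain ⟨c, hc⟩ : ∃ c, b - a = c + 1 := ⟨b - a - 1, by omega⟩
  exact hv (hper ▸ hc ▸ h c)

theorem Equiv.Perm.iterate_apply_symm_iterate {X : Type*} (f : Perm X) {k n : ℕ} (h : k ≤ n)
    (v : X) : f^[k] (f.symm^[n] v) = f.symm^[n - k] v := by
  conv_lhs => rw [← Nat.add_sub_cancel' h, iterate_add_apply]
  exact RightInverse.iterate f.apply_symm_apply k _

section
variable {X : Type*} [DecidableEq X] (f : Perm X) (W : Finset X)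

theorem restrictPerm_of_mem {v : X} (hv : v ∈ W) : restrictPerm f W v = f v := if_pos hv

theorem restrictPerm_of_notMem {v : X} {n : ℕ} (hv : v ∉ W) (hn : f.symm^[n] v ∉ f '' W)
    (hlt : ∀ k < n, f.symm^[k] v ∈ f '' W) : restrictPerm f W v = f.symm^[n] v := by
  rw [restrictPerm, if_neg hv, Nat.sInf_setOf_eq hn fun k hk => not_not.2 (hlt k hk)]

theorem exists_restrictPerm_eq_of_notMem {v : X} (hv : v ∉ W) :
    ∃ n, f.symm^[n] v ∉ f '' W ∧ (∀ k < n, f.symm^[k] v ∈ f '' W) ∧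
      restrictPerm f W v = f.symm^[n] v := by
  obtain ⟨m, hm⟩ := f.symm.injective.exists_iterate_succ_notMem W.finite_toSet hv
  have hne : {n | f.symm^[n] v ∉ f '' W}.Nonempty :=
    ⟨m, by rwa [Set.mem_ofPred_eq, Set.mem_image_equiv, ← iterate_succ_apply' f.symm]⟩
  exact ⟨_, Nat.sInf_mem hne, fun k hk => not_not.1 (Nat.notMem_of_lt_sInf hk), if_neg hv⟩

theorem leftInverse_restrictPerm_symm :
    LeftInverse (restrictPerm f.symm (W.map f.toEmbedding)) (restrictPerm f W) := by
  intro v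
  have hW : (f.symm '' ↑(W.map f.toEmbedding) : Set X) = W := by simp
  by_cases hv : v ∈ W
  · rw [restrictPerm_of_mem f W hv, restrictPerm_of_mem _ _ (by simpa using hv), symm_apply_apply]
  obtain ⟨n, hn, hlt, hr⟩ := exists_restrictPerm_eq_of_notMem f W hv
  rw [hr, restrictPerm_of_notMem (n := n)]
  · exact RightInverse.iterate f.apply_symm_apply n v
  · simpa using hn
  · simpa [hW, RightInverse.iterate f.apply_symm_apply n v] using hv
  · intro k hk
    have hprev := hlt (n - k - 1) (by omega)
    simp only [symm_symm, hW, Finset.mem_coe, f.iterate_apply_symm_iterate hk.le]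
    rw [show n - k = n - k - 1 + 1 by omega, iterate_succ_apply']
    exact Set.mem_image_equiv.1 hprev

theorem rightInverse_restrictPerm_symm :
    RightInverse (restrictPerm f.symm (W.map f.toEmbedding)) (restrictPerm f W) := fun v => by
  simpa [Finset.map_map] using leftInverse_restrictPerm_symm f.symm (W.map f.toEmbedding) v

theorem restrictPerm_bijective : Bijective (restrictPerm f W) :=
  ⟨(leftInverse_restrictPerm_symm f W).injective,
    (rightInverse_restrictPerm_symm f W).surjective⟩

end

/-- The permutation `g = (f|_W)⁻¹ ∘ f` fixes `W` pointwise; hence every permutation `f`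
factors as `f = f|_W ∘ g` with `g` a permutation fixing `W` pointwise. -/
theorem stmt2 {X : Type*} [DecidableEq X] (f : Equiv.Perm X) (W : Finset X) :
    ∃ g : X → X, Function.Bijective g ∧ (∀ v ∈ W, g v = v) ∧
      ∀ v : X, restrictPerm f W (g v) = f v := by
  refine ⟨restrictPerm f.symm (W.map f.toEmbedding) ∘ f,
    (restrictPerm_bijective _ _).comp f.bijective, fun v hv => ?_,
    fun v => rightInverse_restrictPerm_symm f W (f v)⟩
  rw [comp_apply, restrictPerm_of_mem _ _ (by simpa using hv), symm_apply_apply]
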